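/- Let d > k ≥ 1 be integers. There exists a constant C ≥ 1, depending only on d and k, with the following property: for every ξ ∈ ℝ^d∖{0}, every η > 0, and every k-dimensional linear subspace s of ℝ^d admitting an orthonormal basis x_1,…,x_k with |⟨ξ, x_i⟩| < η‖ξ‖ for all i = 1,…,k, there exists a k-dimensional linear subspace t of ℝ^d with t ⊆ ξ^⊥ and d_{(d,k)}(s,t) < Cη. -/

import Mathlib

open MeasureTheory Metric Module
open scoped RealInnerProductSpace ENNReal

noncomputable section

/-- `ℝ^d`. -/
abbrev Ed (d : ℕ) : Type := EuclideanSpace ℝ (Fin d)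

/-- The Grassmannian `G(d,k)` of `k`-dimensional linear subspaces of `ℝ^d`. -/
def Gr (d k : ℕ) : Type := {s : Submodule ℝ (Ed d) // finrank ℝ s = k}

/-- The intersection of a subspace with the unit sphere. -/
def grSphere {d k : ℕ} (s : Gr d k) : Set (Ed d) :=
  (s.1 : Set (Ed d)) ∩ sphere (0 : Ed d) 1

lemma grSphere_isClosed {d k : ℕ} (s : Gr d k) : IsClosed (grSphere s) :=
  (Submodule.closed_of_finiteDimensional s.1).inter isClosed_sphere

lemma submodule_eq_of_sphere_eq {d : ℕ} {s t : Submodule ℝ (Ed d)}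
    (h : (s : Set (Ed d)) ∩ sphere (0 : Ed d) 1 = (t : Set (Ed d)) ∩ sphere (0 : Ed d) 1) :
    s = t := by
  have key : ∀ {s t : Submodule ℝ (Ed d)},
      (s : Set (Ed d)) ∩ sphere (0 : Ed d) 1 = (t : Set (Ed d)) ∩ sphere (0 : Ed d) 1 →
      s ≤ t := by
    intro s t h x hx
    rcases eq_or_ne x 0 with rfl | hx0
    · exact t.zero_mem
    · have hu : ‖x‖⁻¹ • x ∈ (s : Set (Ed d)) ∩ sphere (0 : Ed d) 1 := by
        refine ⟨s.smul_mem _ hx, ?_⟩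
        rw [mem_sphere_iff_norm, sub_zero, norm_smul, norm_inv, norm_norm,
          inv_mul_cancel₀ (norm_ne_zero_iff.2 hx0)]
      rw [h] at hu
      have := t.smul_mem ‖x‖ hu.1
      rwa [smul_smul, mul_inv_cancel₀ (norm_ne_zero_iff.2 hx0), one_smul] at this
  exact le_antisymm (key h) (key h.symm)

/-- The metric `d_{(d,k)}` on the Grassmannian: Hausdorff distance between the
intersections with the unit sphere. -/
instance GrEMetric (d k : ℕ) : EMetricSpace (Gr d k) where
  edist s t := EMetric.hausdorffEdist (grSphere s) (grSphere t)
  edist_self s := EMetric.hausdorffEdist_self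
  edist_comm s t := EMetric.hausdorffEdist_comm
  edist_triangle s t u := EMetric.hausdorffEdist_triangle
  eq_of_edist_eq_zero := by
    intro s t h
    have heq := (EMetric.hausdorffEdist_zero_iff_eq_of_closed (grSphere_isClosed s)
      (grSphere_isClosed t)).1 h
    exact Subtype.ext (submodule_eq_of_sphere_eq heq)

lemma grSphere_nonempty {d k : ℕ} (hk : 1 ≤ k) (s : Gr d k) : (grSphere s).Nonempty := by
  have hbot : s.1 ≠ ⊥ := by
    intro hb
    have h2 := s.2
    rw [hb, finrank_bot] at h2
    omega
  obtain ⟨x, hxs, hx0⟩ := Submodule.ne_bot_iff _ |>.1 hbot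
  refine ⟨‖x‖⁻¹ • x, s.1.smul_mem _ hxs, ?_⟩
  rw [mem_sphere_iff_norm, sub_zero, norm_smul, norm_inv, norm_norm,
    inv_mul_cancel₀ (norm_ne_zero_iff.2 hx0)]

lemma grSphere_empty {d : ℕ} (s : Gr d 0) : grSphere s = ∅ := by
  have hb : s.1 = ⊥ := Submodule.finrank_eq_zero.1 s.2
  ext x
  simp [grSphere, hb, mem_sphere_iff_norm]

lemma gr_edist_ne_top {d k : ℕ} (s t : Gr d k) : edist s t ≠ ⊤ := by
  rcases Nat.eq_zero_or_pos k with rfl | hk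
  · show EMetric.hausdorffEdist (grSphere s) (grSphere t) ≠ ⊤
    rw [grSphere_empty s, grSphere_empty t, EMetric.hausdorffEdist]
    rw [Metric.hausdorffEDist_self]
    exact ENNReal.zero_ne_top
  · exact Metric.hausdorffEdist_ne_top_of_nonempty_of_bounded
      (grSphere_nonempty hk s) (grSphere_nonempty hk t)
      ((isBounded_sphere (x := (0 : Ed d)) (r := 1)).subset Set.inter_subset_right)
      ((isBounded_sphere (x := (0 : Ed d)) (r := 1)).subset Set.inter_subset_right)

instance GrMetric (d k : ℕ) : MetricSpace (Gr d k) :=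
  EMetricSpace.toMetricSpace gr_edist_ne_top

instance (d k : ℕ) : MeasurableSpace (Gr d k) := borel _
instance (d k : ℕ) : BorelSpace (Gr d k) := ⟨rfl⟩

/-- The set `S_{ξ,η}` of subspaces nearly orthogonal to `ξ`. -/
def Sslab {d k : ℕ} (ξ : Ed d) (η : ℝ) : Set (Gr d k) :=
  {s | ‖(s.1.orthogonalProjection ξ : Ed d)‖ < η * ‖ξ‖}

/-- `Γ ⊆ G(d,k)` is `β`-scaling. -/
def BetaScaling {d k : ℕ} (Γ : Set (Gr d k)) (β : ℝ) : Prop :=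
  ∃ γ : Measure (Gr d k), IsProbabilityMeasure γ ∧ γ Γᶜ = 0 ∧
    ∃ C : ℝ, 0 < C ∧ ∀ ξ : Ed d, ξ ≠ 0 → ∀ η : ℝ, 0 < η →
      γ (Sslab ξ η) ≤ ENNReal.ofReal (C * η ^ β)

/-- `E` is a `(d,k,Γ)`-set. -/
def IsDKSet {d k : ℕ} (Γ : Set (Gr d k)) (E : Set (Ed d)) : Prop :=
  ∀ s ∈ Γ, ∃ (t : Ed d) (x : Fin k → Ed d), Orthonormal ℝ x ∧ (∀ i, x i ∈ s.1) ∧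
    ∀ r : Fin k → ℝ, (∀ i, r i ∈ Set.Icc (0 : ℝ) 1) → t + ∑ i, r i • x i ∈ E

/-- Fourier transform of a measure on `ℝ^d`. -/
def FT {d : ℕ} (μ : Measure (Ed d)) (ξ : Ed d) : ℂ :=
  ∫ x, Complex.exp (-2 * Real.pi * Complex.I * (⟪ξ, x⟫ : ℝ)) ∂μ

end


/-! Put `δ = k η`. A vector `y ∈ s` has coordinates at most `‖y‖` in the basis `x`, so
`|⟪ξ, y⟫| ≤ δ ‖ξ‖ ‖y‖`: the orthogonal projection `P` onto `ξ^⊥` moves `y` by at most `δ ‖y‖`.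
For `δ < 1/2` this makes `P` injective on `s`, so `t = P s` lies in `G(d,k)`, and normalizing
`P y`, resp. a preimage of a unit vector of `t`, matches the unit spheres of `s` and `t` up to
`4 δ`. For `δ ≥ 1/2` any `t ≤ ξ^⊥` (one exists as `k < d`) works, since `d_{(d,k)} ≤ 2 ≤ 4 δ`;
hence `C = 4 k + 1`. -/

open Set

lemma Submodule.exists_le_finrank_eq {K M : Type*} [DivisionRing K] [AddCommGroup M] [Module K M]
    {V : Submodule K M} {k : ℕ} (hk : k ≤ finrank K V) : ∃ W ≤ V, finrank K W = k := by
  obtain ⟨b, hb⟩ := exists_linearIndependent_of_le_finrank hk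
  refine ⟨span K (range (V.subtype ∘ b)), ?_, ?_⟩
  · rw [span_le]
    rintro _ ⟨i, rfl⟩
    exact (b i).2
  · rw [finrank_span_eq_card (hb.map' V.subtype V.ker_subtype), Fintype.card_fin]

section NearIdentity

variable {E : Type*} [NormedAddCommGroup E] [NormedSpace ℝ E]

lemma norm_sub_inv_norm_smul_le {a : E} (ha : ‖a‖ = 1) (b : E) :
    ‖a - ‖b‖⁻¹ • b‖ ≤ 2 * ‖a - b‖ := by
  rcases eq_or_ne b 0 with rfl | hb
  · simp [ha]
  have hrescale : ‖b - ‖b‖⁻¹ • b‖ = |‖b‖ - ‖a‖| := by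
    rw [show b - ‖b‖⁻¹ • b = (1 - ‖b‖⁻¹) • b by rw [sub_smul, one_smul], ha, norm_smul,
      Real.norm_eq_abs, show ‖b‖ - 1 = (1 - ‖b‖⁻¹) * ‖b‖ by field_simp, abs_mul, abs_norm]
  calc ‖a - ‖b‖⁻¹ • b‖ ≤ ‖a - b‖ + ‖b - ‖b‖⁻¹ • b‖ := norm_sub_le_norm_sub_add_norm_sub _ _ _
    _ ≤ ‖a - b‖ + ‖b - a‖ := by rw [hrescale]; gcongr; exact abs_norm_sub_norm_le b a
    _ = 2 * ‖a - b‖ := by rw [norm_sub_rev b a]; ring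

lemma exists_mem_inter_sphere_dist_le {s t : Submodule ℝ E} {δ : ℝ} (hδ : δ < 1)
    (hst : ∀ y ∈ s, ∃ w ∈ t, ‖y - w‖ ≤ δ * ‖y‖) {a : E} (has : a ∈ s) (ha : ‖a‖ = 1) :
    ∃ b ∈ (t : Set E) ∩ sphere 0 1, dist a b ≤ 2 * δ := by
  obtain ⟨w, hwt, hw⟩ := hst a has
  rw [ha, mul_one] at hw
  have hw0 : w ≠ 0 := by
    rintro rfl
    rw [sub_zero, ha] at hw
    linarith
  refine ⟨‖w‖⁻¹ • w, ⟨t.smul_mem _ hwt, ?_⟩, ?_⟩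
  · rw [mem_sphere_zero_iff_norm, norm_smul, norm_inv, norm_norm,
      inv_mul_cancel₀ (norm_ne_zero_iff.2 hw0)]
  · rw [dist_eq_norm]
    linarith [norm_sub_inv_norm_smul_le ha w]

lemma hausdorffDist_inter_sphere_le {s t : Submodule ℝ E} {δ : ℝ} (hδ₀ : 0 ≤ δ) (hδ : δ < 1)
    (hst : ∀ y ∈ s, ∃ w ∈ t, ‖y - w‖ ≤ δ * ‖y‖) (hts : ∀ y ∈ t, ∃ w ∈ s, ‖y - w‖ ≤ δ * ‖y‖) :
    hausdorffDist ((s : Set E) ∩ sphere 0 1) ((t : Set E) ∩ sphere 0 1) ≤ 2 * δ :=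
  hausdorffDist_le_of_mem_dist (by positivity)
    (fun _ ⟨has, ha⟩ => exists_mem_inter_sphere_dist_le hδ hst has (mem_sphere_zero_iff_norm.1 ha))
    (fun _ ⟨hat, ha⟩ => exists_mem_inter_sphere_dist_le hδ hts hat (mem_sphere_zero_iff_norm.1 ha))

variable {f : E →ₗ[ℝ] E} {s : Submodule ℝ E} {δ : ℝ}

lemma one_sub_mul_norm_le_norm_apply (hf : ∀ y ∈ s, ‖y - f y‖ ≤ δ * ‖y‖) {y : E} (hy : y ∈ s) :
    (1 - δ) * ‖y‖ ≤ ‖f y‖ := by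
  linarith [norm_sub_norm_le y (f y), hf y hy]

lemma finrank_map_eq_of_norm_sub_le (hδ : δ < 1) (hf : ∀ y ∈ s, ‖y - f y‖ ≤ δ * ‖y‖) :
    finrank ℝ (s.map f) = finrank ℝ s := by
  have hinj : Function.Injective (f.domRestrict s) := by
    refine LinearMap.ker_eq_bot.1 (LinearMap.ker_eq_bot'.2 fun y hy => ?_)
    have hbound := one_sub_mul_norm_le_norm_apply hf y.2
    rw [show f y = 0 from hy, norm_zero] at hbound
    have hy0 : ‖(y : E)‖ = 0 := by nlinarith [norm_nonneg (y : E)]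
    exact Subtype.ext (norm_eq_zero.1 hy0)
  rw [← LinearMap.range_domRestrict, LinearMap.finrank_range_of_inj hinj]

lemma hausdorffDist_inter_sphere_map_le (hδ₀ : 0 ≤ δ) (hδ : δ < 1 / 2)
    (hf : ∀ y ∈ s, ‖y - f y‖ ≤ δ * ‖y‖) :
    hausdorffDist ((s : Set E) ∩ sphere 0 1) ((s.map f : Set E) ∩ sphere 0 1) ≤ 4 * δ := by
  have hforth : ∀ y ∈ s, ∃ w ∈ s.map f, ‖y - w‖ ≤ 2 * δ * ‖y‖ := fun y hy =>
    ⟨f y, s.mem_map_of_mem hy, (hf y hy).trans (by nlinarith [norm_nonneg y])⟩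
  have hback : ∀ y ∈ s.map f, ∃ w ∈ s, ‖y - w‖ ≤ 2 * δ * ‖y‖ := by
    rintro _ ⟨z, hz, rfl⟩
    refine ⟨z, hz, ?_⟩
    have hlower := one_sub_mul_norm_le_norm_apply hf hz
    rw [norm_sub_rev]
    nlinarith [hf z hz, mul_le_mul_of_nonneg_left hlower hδ₀,
      mul_nonneg (mul_nonneg hδ₀ (norm_nonneg z)) (by linarith : (0 : ℝ) ≤ 1 - 2 * δ)]
  have := hausdorffDist_inter_sphere_le (by positivity) (by linarith) hforth hback
  linarith

end NearIdentity

section InnerProduct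

variable {F : Type*} [NormedAddCommGroup F] [InnerProductSpace ℝ F]

lemma norm_sub_starProjection_orthogonal_singleton (ξ y : F) :
    ‖y - (ℝ ∙ ξ)ᗮ.starProjection y‖ = |⟪ξ, y⟫| / ‖ξ‖ := by
  rw [sub_eq_iff_eq_add.2 ((ℝ ∙ ξ).starProjection_add_starProjection_orthogonal y).symm,
    Submodule.starProjection_singleton, norm_smul, Real.norm_eq_abs, abs_div]
  simp only [RCLike.ofReal_real_eq_id, id, abs_pow, abs_norm]
  rcases eq_or_ne ‖ξ‖ 0 with hξ | hξ
  · simp [hξ]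
  · field_simp

lemma abs_inner_le_of_mem_span_orthonormal {ι : Type*} [Fintype ι] {x : ι → F}
    (hx : Orthonormal ℝ x) {v : F} {M : ℝ} (hM : ∀ i, |⟪v, x i⟫| ≤ M) {y : F}
    (hy : y ∈ Submodule.span ℝ (range x)) : |⟪v, y⟫| ≤ Fintype.card ι * M * ‖y‖ := by
  obtain ⟨c, rfl⟩ := (Submodule.mem_span_range_iff_exists_fun ℝ).1 hy
  have hc : ∀ i, |c i| ≤ ‖∑ j, c j • x j‖ := fun i => by
    simpa [hx.inner_right_fintype, hx.1 i] using abs_real_inner_le_norm (x i) (∑ j, c j • x j)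
  calc |⟪v, ∑ j, c j • x j⟫| = |∑ j, c j * ⟪v, x j⟫| := by simp only [inner_sum, inner_smul_right]
    _ ≤ ∑ j, |c j| * |⟪v, x j⟫| := by
          simpa only [abs_mul] using Finset.abs_sum_le_sum_abs (fun j => c j * ⟪v, x j⟫) Finset.univ
    _ ≤ ∑ _j : ι, ‖∑ j, c j • x j‖ * M := by gcongr with j; exacts [hc j, hM j]
    _ = Fintype.card ι * M * ‖∑ j, c j • x j‖ := by simp; ring

end InnerProduct

namespace Gr

variable {d k : ℕ}

lemma dist_le_two (s t : Gr d k) : dist s t ≤ 2 := by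
  show hausdorffDist (grSphere s) (grSphere t) ≤ 2
  rcases Nat.eq_zero_or_pos k with rfl | hk
  · simp [grSphere_empty]
  have hbdd : ∀ u : Gr d k, Bornology.IsBounded (grSphere u) := fun _ =>
    isBounded_sphere.subset inter_subset_right
  calc hausdorffDist (grSphere s) (grSphere t) ≤ diam (grSphere s ∪ grSphere t) :=
        hausdorffDist_le_diam (grSphere_nonempty hk s) (hbdd s) (grSphere_nonempty hk t) (hbdd t)
    _ ≤ diam (closedBall (0 : Ed d) 1) :=
        diam_mono (union_subset (inter_subset_right.trans sphere_subset_closedBall)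
          (inter_subset_right.trans sphere_subset_closedBall)) isBounded_closedBall
    _ ≤ 2 := by simpa using diam_closedBall (x := (0 : Ed d)) zero_le_one

lemma exists_le_orthogonal_singleton (hkd : k < d) {ξ : Ed d} (hξ : ξ ≠ 0) :
    ∃ t : Gr d k, t.1 ≤ (ℝ ∙ ξ)ᗮ := by
  have hrank := (ℝ ∙ ξ).finrank_add_finrank_orthogonal
  rw [finrank_span_singleton hξ, finrank_euclideanSpace_fin] at hrank
  obtain ⟨W, hW, hWk⟩ := Submodule.exists_le_finrank_eq (V := (ℝ ∙ ξ)ᗮ) (k := k) (by omega)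
  exact ⟨⟨W, hWk⟩, hW⟩

lemma span_range_eq_of_linearIndependent (s : Gr d k) {x : Fin k → Ed d}
    (hx : LinearIndependent ℝ x) (hxs : ∀ i, x i ∈ s.1) : Submodule.span ℝ (range x) = s.1 :=
  Submodule.eq_of_le_of_finrank_le (Submodule.span_le.2 (range_subset_iff.2 hxs))
    (by rw [s.2, finrank_span_eq_card hx, Fintype.card_fin])

/-- The witness is the orthogonal projection of `s` onto `ξ^⊥`. -/
lemma exists_le_orthogonal_singleton_dist_le {ξ : Ed d} (hξ : ξ ≠ 0) {η : ℝ} (hη : 0 ≤ η)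
    (hkη : k * η < 1 / 2) (s : Gr d k) {x : Fin k → Ed d} (hx : Orthonormal ℝ x)
    (hxs : ∀ i, x i ∈ s.1) (hξx : ∀ i, |⟪ξ, x i⟫| ≤ η * ‖ξ‖) :
    ∃ t : Gr d k, t.1 ≤ (ℝ ∙ ξ)ᗮ ∧ dist s t ≤ 4 * (k * η) := by
  set P : Ed d →ₗ[ℝ] Ed d := (ℝ ∙ ξ)ᗮ.starProjection
  have hP : ∀ y ∈ s.1, ‖y - P y‖ ≤ k * η * ‖y‖ := by
    intro y hy
    rw [← span_range_eq_of_linearIndependent s hx.linearIndependent hxs] at hy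
    have hinner := abs_inner_le_of_mem_span_orthonormal hx hξx hy
    rw [Fintype.card_fin] at hinner
    change ‖y - (ℝ ∙ ξ)ᗮ.starProjection y‖ ≤ _
    rw [norm_sub_starProjection_orthogonal_singleton, div_le_iff₀ (norm_pos_iff.2 hξ)]
    linarith
  refine ⟨⟨s.1.map P, (finrank_map_eq_of_norm_sub_le (by linarith) hP).trans s.2⟩, ?_, ?_⟩
  · exact Submodule.map_le_iff_le_comap.2 fun y _ => (ℝ ∙ ξ)ᗮ.starProjection_apply_mem y
  · exact hausdorffDist_inter_sphere_map_le (by positivity) hkη hP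

end Gr

theorem stmt13_general (d k : ℕ) (hkd : k < d) :
    ∃ C : ℝ, 1 ≤ C ∧ ∀ ξ : Ed d, ξ ≠ 0 → ∀ η : ℝ, 0 < η → ∀ s : Gr d k,
      (∃ x : Fin k → Ed d, Orthonormal ℝ x ∧ (∀ i, x i ∈ s.1) ∧
        ∀ i, |⟪ξ, x i⟫| < η * ‖ξ‖) →
      ∃ t : Gr d k, t.1 ≤ (Submodule.span ℝ {ξ})ᗮ ∧ dist s t < C * η := by
  refine ⟨4 * k + 1, by linarith [(k.cast_nonneg : (0 : ℝ) ≤ k)], ?_⟩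
  rintro ξ hξ η hη s ⟨x, hx, hxs, hξx⟩
  by_cases hkη : (k : ℝ) * η < 1 / 2
  · obtain ⟨t, ht, hdist⟩ :=
      Gr.exists_le_orthogonal_singleton_dist_le hξ hη.le hkη s hx hxs fun i => (hξx i).le
    exact ⟨t, ht, by linarith⟩
  · obtain ⟨t, ht⟩ := Gr.exists_le_orthogonal_singleton hkd hξ
    exact ⟨t, ht, by linarith [Gr.dist_le_two s t]⟩

/-- a subspace with an orthonormal basis nearly orthogonal to `ξ` is close, in the
metric `d_{(d,k)}`, to a `k`-dimensional subspace of `ξ^⊥`. -/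
theorem stmt13 (d k : ℕ) (hk : 1 ≤ k) (hkd : k < d) :
    ∃ C : ℝ, 1 ≤ C ∧ ∀ ξ : Ed d, ξ ≠ 0 → ∀ η : ℝ, 0 < η → ∀ s : Gr d k,
      (∃ x : Fin k → Ed d, Orthonormal ℝ x ∧ (∀ i, x i ∈ s.1) ∧
        ∀ i, |⟪ξ, x i⟫| < η * ‖ξ‖) →
      ∃ t : Gr d k, t.1 ≤ (Submodule.span ℝ {ξ})ᗮ ∧ dist s t < C * η :=
  stmt13_general d k hkd
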